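/- Let 1 < p < ∞ and let c(p) = tan(π/(2p)) if p ≤ 2 and c(p) = cot(π/(2p)) if p > 2. Let H : L^p(ℝ, ℝ) → L^p(ℝ, ℝ) be a continuous linear map with ‖H g‖_p ≤ c(p) ‖g‖_p for all g. Let 0 < m ≤ M and let K, K̃ : ℝ → ℝ be measurable functions with m ≤ K(y) ≤ M and m ≤ K̃(y) ≤ M for almost every y, and with log K, log K̃ ∈ L^p(ℝ, ℝ). Let h and h̃ be measurable representatives of H(log K) and H(log K̃), and define K₊(y) = √(K(y)) · exp((i/2)h(y)) and K̃₊(y) = √(K̃(y)) · exp((i/2)h̃(y)) (and analogously K₋, K̃₋ with −(i/2)). If ‖K − K̃‖_p ≤ ε, then ‖K₊ − K̃₊‖_p ≤ (M^{1/2}/(2m)) (1 + c(p)) ε, and the same bound holds for ‖K₋ − K̃₋‖_p. -/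

import Mathlib

open MeasureTheory Real
open scoped ENNReal

/-! Write `√K e^{iah} - √K̃ e^{iah̃} = (√K - √K̃) e^{iah} + √K̃ (e^{iah} - e^{iah̃})`. Pointwise the
first term is at most `|K - K̃| / (2√m)`, and the second at most `√M |a| |h - h̃|` because
`t ↦ e^{iat}` is `|a|`-Lipschitz. In `L^p`,
`‖h - h̃‖ = ‖H (log K - log K̃)‖ ≤ c(p) ‖log K - log K̃‖`, and `log` is `1/m`-Lipschitz on
`[m, ∞)`, so both terms are controlled by `‖K - K̃‖`. -/

/-- The best constant in the Titchmarsh–Riesz theorem. -/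
noncomputable def TRconst (p : ℝ) : ℝ :=
  if p ≤ 2 then Real.tan (Real.pi / (2 * p)) else Real.cot (Real.pi / (2 * p))

lemma TRconst_nonneg {p : ℝ} (hp : 1 < p) : 0 ≤ TRconst p := by
  have hx₀ : 0 ≤ π / (2 * p) := by positivity
  have hx₁ : π / (2 * p) ≤ π / 2 := by
    gcongr
    linarith
  unfold TRconst
  split_ifs
  · exact tan_nonneg_of_nonneg_of_le_pi_div_two hx₀ hx₁
  · rw [cot_eq_cos_div_sin]
    exact div_nonneg (cos_nonneg_of_mem_Icc ⟨by linarith [pi_pos], hx₁⟩)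
      (sin_nonneg_of_nonneg_of_le_pi hx₀ (by linarith [pi_pos]))

namespace Real

lemma abs_sqrt_sub_sqrt_le {m a b : ℝ} (hm : 0 < m) (ha : m ≤ a) (hb : m ≤ b) :
    |√a - √b| ≤ |a - b| / (2 * √m) := by
  rw [le_div_iff₀ (by positivity)]
  have hab : (√a - √b) * (√a + √b) = a - b := by
    rw [mul_comm, ← mul_self_sub_mul_self, mul_self_sqrt (hm.le.trans ha),
      mul_self_sqrt (hm.le.trans hb)]
  calc |√a - √b| * (2 * √m) ≤ |√a - √b| * (√a + √b) := by
        gcongr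
        linarith [sqrt_le_sqrt ha, sqrt_le_sqrt hb]
    _ = |a - b| := by rw [← hab, abs_mul, abs_of_nonneg (by positivity : 0 ≤ √a + √b)]

lemma abs_log_sub_log_le {m a b : ℝ} (hm : 0 < m) (ha : m ≤ a) (hb : m ≤ b) :
    |log a - log b| ≤ |a - b| / m := by
  have key : ∀ x y : ℝ, m ≤ x → m ≤ y → log x - log y ≤ |x - y| / m := by
    intro x y hx hy
    have hy₀ : 0 < y := hm.trans_le hy
    rw [← log_div (hm.trans_le hx).ne' hy₀.ne']
    calc log (x / y) ≤ x / y - 1 := log_le_sub_one_of_pos (div_pos (hm.trans_le hx) hy₀)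
      _ = (x - y) / y := by field_simp
      _ ≤ |x - y| / m := div_le_div₀ (abs_nonneg _) (le_abs_self _) hm hy
  refine abs_sub_le_iff.2 ⟨key a b ha hb, ?_⟩
  rw [abs_sub_comm a b]
  exact key b a hb ha

end Real

namespace Complex

lemma norm_exp_mul_ofReal_sub_exp_mul_ofReal_le {w : ℂ} (hw : w.re = 0) (s t : ℝ) :
    ‖exp (w * s) - exp (w * t)‖ ≤ ‖w‖ * |s - t| := by
  obtain ⟨b, rfl⟩ : ∃ b : ℝ, w = b * I := ⟨w.im, Complex.ext (by simp [hw]) (by simp)⟩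
  have hsplit : exp (b * I * s) - exp (b * I * t) =
      exp ((b * t : ℝ) * I) * (exp (I * ↑(b * (s - t))) - 1) := by
    rw [mul_sub, mul_one, ← exp_add]
    push_cast
    ring_nf
  rw [hsplit, norm_mul, norm_exp_ofReal_mul_I, one_mul]
  calc _ ≤ ‖b * (s - t)‖ := norm_exp_I_mul_ofReal_sub_one_le
    _ = ‖(b : ℂ) * I‖ * |s - t| := by simp

end Complex

open Complex in
lemma norm_sqrt_mul_exp_sub_sqrt_mul_exp_le {m M k k' s t : ℝ} {w : ℂ} (hm : 0 < m)
    (hk : m ≤ k) (hk' : m ≤ k') (hk'M : k' ≤ M) (hw : w.re = 0) :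
    ‖(√k : ℂ) * exp (w * s) - (√k' : ℂ) * exp (w * t)‖ ≤
      √M / (2 * m) * |k - k'| + √M * ‖w‖ * |s - t| := by
  have hsplit : (√k : ℂ) * exp (w * s) - (√k' : ℂ) * exp (w * t) =
      ((√k - √k' : ℝ) : ℂ) * exp (w * s) + (√k' : ℂ) * (exp (w * s) - exp (w * t)) := by
    push_cast
    ring
  have hsqrt : |√k - √k'| ≤ √M / (2 * m) * |k - k'| := by
    have hmM : √m ≤ √M := Real.sqrt_le_sqrt (hk'.trans hk'M)
    calc |√k - √k'| ≤ |k - k'| / (2 * √m) := Real.abs_sqrt_sub_sqrt_le hm hk hk'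
      _ = √m / (2 * m) * |k - k'| := by
          field_simp
          rw [Real.sq_sqrt hm.le]
      _ ≤ √M / (2 * m) * |k - k'| := by gcongr
  have hunit : ‖exp (w * s)‖ = 1 := by simp [norm_exp, hw]
  rw [hsplit]
  refine (norm_add_le _ _).trans (add_le_add ?_ ?_)
  · rwa [norm_mul, hunit, mul_one, norm_real, Real.norm_eq_abs]
  · rw [norm_mul, norm_real, Real.norm_of_nonneg (Real.sqrt_nonneg _), mul_assoc]
    exact mul_le_mul (Real.sqrt_le_sqrt hk'M) (norm_exp_mul_ofReal_sub_exp_mul_ofReal_le hw s t)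
      (norm_nonneg _) (Real.sqrt_nonneg _)

namespace MeasureTheory

variable {α : Type*} [MeasurableSpace α] {μ : Measure α}

lemma aestronglyMeasurable_of_log {f : α → ℝ} (hpos : ∀ᵐ x ∂μ, 0 < f x)
    (hlog : AEStronglyMeasurable (fun x => Real.log (f x)) μ) : AEStronglyMeasurable f μ :=
  (continuous_exp.comp_aestronglyMeasurable hlog).congr
    (hpos.mono fun _ hx => Real.exp_log hx)

lemma eLpNorm_le_add_of_ae_norm_le {E F G : Type*} [NormedAddCommGroup E]
    [NormedAddCommGroup F] [NormedAddCommGroup G] {p : ℝ≥0∞} (hp : 1 ≤ p)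
    {u : α → E} {f : α → F} {g : α → G} (hf : AEStronglyMeasurable f μ)
    (hg : AEStronglyMeasurable g μ) {a b : ℝ} (ha : 0 ≤ a) (hb : 0 ≤ b)
    (h : ∀ᵐ x ∂μ, ‖u x‖ ≤ a * ‖f x‖ + b * ‖g x‖) :
    eLpNorm u p μ ≤ ENNReal.ofReal a * eLpNorm f p μ + ENNReal.ofReal b * eLpNorm g p μ :=
  calc eLpNorm u p μ ≤ eLpNorm (fun x => a * ‖f x‖ + b * ‖g x‖) p μ :=
        eLpNorm_mono_ae_real (h.mono fun x hx => hx)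
    _ ≤ eLpNorm (fun x => a * ‖f x‖) p μ + eLpNorm (fun x => b * ‖g x‖) p μ :=
        eLpNorm_add_le (hf.norm.const_mul a) (hg.norm.const_mul b) hp
    _ ≤ ENNReal.ofReal a * eLpNorm f p μ + ENNReal.ofReal b * eLpNorm g p μ := by
        gcongr <;> refine eLpNorm_le_mul_eLpNorm_of_ae_le_mul (.of_forall fun x => ?_) p
        · simp [abs_of_nonneg ha]
        · simp [abs_of_nonneg hb]

lemma eLpNorm_sub_le_of_ae_eq_apply_toLp {β E F 𝕜 : Type*} [MeasurableSpace β]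
    {ν : Measure β} [NormedField 𝕜] [NormedAddCommGroup E] [NormedSpace 𝕜 E]
    [NormedAddCommGroup F] [NormedSpace 𝕜 F] {p : ℝ≥0∞} [Fact (1 ≤ p)]
    {H : Lp E p μ →L[𝕜] Lp F p ν} {c : ℝ} (hH : ∀ g, ‖H g‖ ≤ c * ‖g‖)
    {f g : α → E} (hf : MemLp f p μ) (hg : MemLp g p μ)
    {u v : β → F} (hu : u =ᵐ[ν] H (hf.toLp f)) (hv : v =ᵐ[ν] H (hg.toLp g)) :
    eLpNorm (fun x => u x - v x) p ν ≤ ENNReal.ofReal c * eLpNorm (fun x => f x - g x) p μ := by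
  have huv : (fun x => u x - v x) =ᵐ[ν] ⇑(H (hf.toLp f) - H (hg.toLp g)) := by
    filter_upwards [hu, hv, Lp.coeFn_sub (H (hf.toLp f)) (H (hg.toLp g))] with x hux hvx hsub
    rw [hsub, Pi.sub_apply, hux, hvx]
  have hfg : (fun x => f x - g x) =ᵐ[μ] ⇑(hf.toLp f - hg.toLp g) := by
    filter_upwards [Lp.coeFn_sub (hf.toLp f) (hg.toLp g), hf.coeFn_toLp, hg.coeFn_toLp]
      with x hsub hfx hgx
    rw [hsub, Pi.sub_apply, hfx, hgx]
  rw [eLpNorm_congr_ae huv, eLpNorm_congr_ae hfg, ← Lp.enorm_def, ← Lp.enorm_def, ← map_sub,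
    ← ofReal_norm, ← ofReal_norm, ← ENNReal.ofReal_mul' (norm_nonneg _)]
  exact ENNReal.ofReal_le_ofReal (hH _)

lemma eLpNorm_log_sub_log_le {p : ℝ≥0∞} {K K' : α → ℝ} {m : ℝ} (hm : 0 < m)
    (hK : ∀ᵐ x ∂μ, m ≤ K x) (hK' : ∀ᵐ x ∂μ, m ≤ K' x) :
    eLpNorm (fun x => Real.log (K x) - Real.log (K' x)) p μ ≤
      ENNReal.ofReal m⁻¹ * eLpNorm (fun x => K x - K' x) p μ := by
  refine eLpNorm_le_mul_eLpNorm_of_ae_le_mul ?_ p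
  filter_upwards [hK, hK'] with x hx hx'
  simpa [div_eq_inv_mul] using Real.abs_log_sub_log_le hm hx hx'

lemma eLpNorm_sqrt_mul_exp_sub_sqrt_mul_exp_le {p : ℝ≥0∞} (hp : 1 ≤ p)
    {K K' u v : α → ℝ} {m M C : ℝ} {w : ℂ} (hm : 0 < m) (hC : 0 ≤ C) (hw : w.re = 0)
    (hK : ∀ᵐ x ∂μ, m ≤ K x) (hK' : ∀ᵐ x ∂μ, m ≤ K' x ∧ K' x ≤ M)
    (hKK' : AEStronglyMeasurable (fun x => K x - K' x) μ)
    (huv : AEStronglyMeasurable (fun x => u x - v x) μ)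
    (huvK : eLpNorm (fun x => u x - v x) p μ ≤
      ENNReal.ofReal C * eLpNorm (fun x => K x - K' x) p μ) :
    eLpNorm (fun x => (√(K x) : ℂ) * Complex.exp (w * u x) -
        (√(K' x) : ℂ) * Complex.exp (w * v x)) p μ ≤
      ENNReal.ofReal (√M / (2 * m) + √M * ‖w‖ * C) * eLpNorm (fun x => K x - K' x) p μ :=
  calc _ ≤ ENNReal.ofReal (√M / (2 * m)) * eLpNorm (fun x => K x - K' x) p μ +
        ENNReal.ofReal (√M * ‖w‖) * eLpNorm (fun x => u x - v x) p μ := by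
        refine eLpNorm_le_add_of_ae_norm_le hp hKK' huv (by positivity) (by positivity) ?_
        filter_upwards [hK, hK'] with x hx hx'
        exact norm_sqrt_mul_exp_sub_sqrt_mul_exp_le hm hx hx'.1 hx'.2 hw
    _ ≤ ENNReal.ofReal (√M / (2 * m)) * eLpNorm (fun x => K x - K' x) p μ +
        ENNReal.ofReal (√M * ‖w‖) *
          (ENNReal.ofReal C * eLpNorm (fun x => K x - K' x) p μ) := by
        gcongr
    _ = _ := by
        rw [← mul_assoc, ← ENNReal.ofReal_mul (by positivity), ← add_mul,
          ← ENNReal.ofReal_add (by positivity) (by positivity)]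

end MeasureTheory

theorem multiplicative_wiener_hopf_bounds_real_general (p : ℝ) (hp : 1 < p)
    [Fact (1 ≤ ENNReal.ofReal p)]
    (H : Lp ℝ (ENNReal.ofReal p) (volume : Measure ℝ) →L[ℝ]
         Lp ℝ (ENNReal.ofReal p) (volume : Measure ℝ))
    (hH : ∀ g, ‖H g‖ ≤ TRconst p * ‖g‖)
    (m M : ℝ) (hm : 0 < m)
    (K Ktilde : ℝ → ℝ)
    (hKbd : ∀ᵐ y : ℝ, m ≤ K y ∧ K y ≤ M) (hKtbd : ∀ᵐ y : ℝ, m ≤ Ktilde y ∧ Ktilde y ≤ M)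
    (hL : MemLp (fun y => Real.log (K y)) (ENNReal.ofReal p) (volume : Measure ℝ))
    (hLt : MemLp (fun y => Real.log (Ktilde y)) (ENNReal.ofReal p) (volume : Measure ℝ))
    (h htilde : ℝ → ℝ)
    (hrep : h =ᵐ[volume] (H (hL.toLp _) : Lp ℝ (ENNReal.ofReal p) (volume : Measure ℝ)))
    (hrept : htilde =ᵐ[volume]
      (H (hLt.toLp _) : Lp ℝ (ENNReal.ofReal p) (volume : Measure ℝ)))
    (ε : ℝ)
    (hdist : eLpNorm (fun y => K y - Ktilde y) (ENNReal.ofReal p) (volume : Measure ℝ) ≤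
      ENNReal.ofReal ε) :
    eLpNorm (fun y =>
        (Real.sqrt (K y) : ℂ) * Complex.exp ((Complex.I / 2) * (h y : ℂ)) -
        (Real.sqrt (Ktilde y) : ℂ) * Complex.exp ((Complex.I / 2) * (htilde y : ℂ)))
        (ENNReal.ofReal p) (volume : Measure ℝ) ≤
      ENNReal.ofReal (Real.sqrt M / (2 * m) * (1 + TRconst p) * ε) ∧
    eLpNorm (fun y =>
        (Real.sqrt (K y) : ℂ) * Complex.exp (-(Complex.I / 2) * (h y : ℂ)) -
        (Real.sqrt (Ktilde y) : ℂ) * Complex.exp (-(Complex.I / 2) * (htilde y : ℂ)))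
        (ENNReal.ofReal p) (volume : Measure ℝ) ≤
      ENNReal.ofReal (Real.sqrt M / (2 * m) * (1 + TRconst p) * ε) := by
  set c := TRconst p
  set D := eLpNorm (fun y => K y - Ktilde y) (ENNReal.ofReal p) volume
  have hc : 0 ≤ c := TRconst_nonneg hp
  have hK : ∀ᵐ y, m ≤ K y := hKbd.mono fun _ hy => hy.1
  have hKt : ∀ᵐ y, m ≤ Ktilde y := hKtbd.mono fun _ hy => hy.1
  have hKmeas : AEStronglyMeasurable (fun y => K y - Ktilde y) volume :=
    (aestronglyMeasurable_of_log (hK.mono fun _ hy => hm.trans_le hy) hL.1).sub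
      (aestronglyMeasurable_of_log (hKt.mono fun _ hy => hm.trans_le hy) hLt.1)
  have hhmeas : AEStronglyMeasurable (fun y => h y - htilde y) volume :=
    ((Lp.aestronglyMeasurable _).congr hrep.symm).sub
      ((Lp.aestronglyMeasurable _).congr hrept.symm)
  have hhilb : eLpNorm (fun y => h y - htilde y) (ENNReal.ofReal p) volume ≤
      ENNReal.ofReal (c / m) * D := by
    rw [div_eq_mul_inv, ENNReal.ofReal_mul hc, mul_assoc]
    exact (eLpNorm_sub_le_of_ae_eq_apply_toLp hH hL hLt hrep hrept).trans
      (by gcongr; exact eLpNorm_log_sub_log_le hm hK hKt)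
  have key : ∀ w : ℂ, w.re = 0 → ‖w‖ = 1 / 2 →
      eLpNorm (fun y => (√(K y) : ℂ) * Complex.exp (w * h y) -
        (√(Ktilde y) : ℂ) * Complex.exp (w * htilde y)) (ENNReal.ofReal p) volume ≤
      ENNReal.ofReal (√M / (2 * m) * (1 + c) * ε) := by
    intro w hw hw_norm
    calc _ ≤ ENNReal.ofReal (√M / (2 * m) + √M * ‖w‖ * (c / m)) * D :=
          eLpNorm_sqrt_mul_exp_sub_sqrt_mul_exp_le (ENNReal.one_le_ofReal.2 hp.le) hm
            (by positivity) hw hK hKtbd hKmeas hhmeas hhilb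
      _ = ENNReal.ofReal (√M / (2 * m) * (1 + c)) * D := by
          rw [hw_norm]
          congr 2
          field_simp
      _ ≤ ENNReal.ofReal (√M / (2 * m) * (1 + c)) * ENNReal.ofReal ε := by gcongr
      _ = ENNReal.ofReal (√M / (2 * m) * (1 + c) * ε) :=
          (ENNReal.ofReal_mul (by positivity)).symm
  exact ⟨key _ (by simp) (by simp), key _ (by simp) (by simp)⟩

/-- **Multiplicative bounds in `L^p` for real-valued kernels**: if the kernels `K, K̃`
are real with `m ≤ K ≤ M` a.e., then the factors
`K₊ = K^{1/2} exp((i/2)H(log K))`, `K₋ = K^{1/2} exp(−(i/2)H(log K))` satisfy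
`‖K₊ − K̃₊‖_p ≤ (M^{1/2}/(2m)) (1 + c(p)) ε` whenever `‖K − K̃‖_p ≤ ε`. -/
theorem multiplicative_wiener_hopf_bounds_real (p : ℝ) (hp : 1 < p)
    [Fact (1 ≤ ENNReal.ofReal p)]
    (H : Lp ℝ (ENNReal.ofReal p) (volume : Measure ℝ) →L[ℝ]
         Lp ℝ (ENNReal.ofReal p) (volume : Measure ℝ))
    (hH : ∀ g, ‖H g‖ ≤ TRconst p * ‖g‖)
    (m M : ℝ) (hm : 0 < m) (hmM : m ≤ M)
    (K Ktilde : ℝ → ℝ) (hKmeas : Measurable K) (hKtmeas : Measurable Ktilde)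
    (hKbd : ∀ᵐ y : ℝ, m ≤ K y ∧ K y ≤ M) (hKtbd : ∀ᵐ y : ℝ, m ≤ Ktilde y ∧ Ktilde y ≤ M)
    (hL : MemLp (fun y => Real.log (K y)) (ENNReal.ofReal p) (volume : Measure ℝ))
    (hLt : MemLp (fun y => Real.log (Ktilde y)) (ENNReal.ofReal p) (volume : Measure ℝ))
    (h htilde : ℝ → ℝ) (hhmeas : Measurable h) (hhtmeas : Measurable htilde)
    (hrep : h =ᵐ[volume] (H (hL.toLp _) : Lp ℝ (ENNReal.ofReal p) (volume : Measure ℝ)))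
    (hrept : htilde =ᵐ[volume]
      (H (hLt.toLp _) : Lp ℝ (ENNReal.ofReal p) (volume : Measure ℝ)))
    (ε : ℝ)
    (hdist : eLpNorm (fun y => K y - Ktilde y) (ENNReal.ofReal p) (volume : Measure ℝ) ≤
      ENNReal.ofReal ε) :
    eLpNorm (fun y =>
        (Real.sqrt (K y) : ℂ) * Complex.exp ((Complex.I / 2) * (h y : ℂ)) -
        (Real.sqrt (Ktilde y) : ℂ) * Complex.exp ((Complex.I / 2) * (htilde y : ℂ)))
        (ENNReal.ofReal p) (volume : Measure ℝ) ≤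
      ENNReal.ofReal (Real.sqrt M / (2 * m) * (1 + TRconst p) * ε) ∧
    eLpNorm (fun y =>
        (Real.sqrt (K y) : ℂ) * Complex.exp (-(Complex.I / 2) * (h y : ℂ)) -
        (Real.sqrt (Ktilde y) : ℂ) * Complex.exp (-(Complex.I / 2) * (htilde y : ℂ)))
        (ENNReal.ofReal p) (volume : Measure ℝ) ≤
      ENNReal.ofReal (Real.sqrt M / (2 * m) * (1 + TRconst p) * ε) :=
  multiplicative_wiener_hopf_bounds_real_general p hp H hH m M hm K Ktilde hKbd hKtbd hL hLt h
    htilde hrep hrept ε hdist
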